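/- arXiv:1901.06718 — 4 statements merged into one kernel-verified Lean document; each statement's English description precedes it below -/
import Mathlib

section
/- For real numbers l, m with 0 < l < m and any σ > 0, for all y ∈ ℝ: ∫_ℝ e^{l|x|} / ((1 + σ e^{|x|})^m · e^{m|x−y|}) dx ≤ B · e^{l|y|} / (1 + σ e^{|y|})^m, where B = 4 / min{l, m−l}. -/
open Real MeasureTheory Set

lemma aux_integrable_exp_abs (δ : ℝ) (hδ : 0 < δ) :
    Integrable (fun x : ℝ => Real.exp (-δ * |x|)) := by
  have hI : IntegrableOn (fun x : ℝ => Real.exp (-δ * |x|)) (Ioi 0) := by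
    refine (exp_neg_integrableOn_Ioi 0 hδ).congr_fun (fun x hx => ?_) measurableSet_Ioi
    rw [abs_of_pos hx]
  rw [← integrableOn_univ, ← @Iio_union_Ici _ _ (0 : ℝ), integrableOn_union,
    integrableOn_Ici_iff_integrableOn_Ioi]
  refine ⟨?_, hI⟩
  rw [← (Measure.measurePreserving_neg (volume : Measure ℝ)).integrableOn_comp_preimage
      (Homeomorph.neg ℝ).measurableEmbedding]
  simpa [Function.comp_def, abs_neg] using hI

lemma aux_integral_exp_abs (δ : ℝ) (hδ : 0 < δ) :
    (∫ x : ℝ, Real.exp (-δ * |x|)) = 2 / δ := by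
  rw [integral_comp_abs (f := fun x => Real.exp (-δ * x))]
  have h := integral_comp_mul_left_Ioi (fun x : ℝ => Real.exp (-x)) 0 hδ
  simp only [mul_zero, integral_exp_neg_Ioi_zero, smul_eq_mul, mul_one] at h
  have : ∀ x : ℝ, Real.exp (-δ * x) = Real.exp (-(δ * x)) := by intro x; ring_nf
  simp_rw [this, h]
  ring

lemma aux_keymul (l m σ : ℝ) (hl : 0 < l) (hlm : l < m) (hσ : 0 < σ) (x y : ℝ) :
    Real.exp (l * |x|) * (1 + σ * Real.exp |y|) ^ m ≤
      Real.exp (l * |y|) * (1 + σ * Real.exp |x|) ^ m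
        * Real.exp (max l (m - l) * |x - y|) := by
  set a := |x| with ha
  set b := |y| with hb
  set K := max l (m - l) with hK
  set d := |x - y| with hd
  have hm : (0 : ℝ) < m := hl.trans hlm
  have hab1 : a - b ≤ d := abs_sub_abs_le_abs_sub x y
  have hab2 : b - a ≤ d := by
    have := abs_sub_abs_le_abs_sub y x
    rwa [abs_sub_comm] at this
  have hKl : l ≤ K := le_max_left _ _
  have hKml : m - l ≤ K := le_max_right _ _
  have hbx : (0:ℝ) < 1 + σ * Real.exp a := by positivity
  have hby : (0:ℝ) < 1 + σ * Real.exp b := by positivity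
  rcases le_total a b with hab | hab
  · -- a ≤ b
    have h1 : 1 + σ * Real.exp b ≤ Real.exp (b - a) * (1 + σ * Real.exp a) := by
      have h2 : (1:ℝ) ≤ Real.exp (b - a) := Real.one_le_exp (by linarith)
      have h3 : Real.exp (b - a) * Real.exp a = Real.exp b := by
        rw [← Real.exp_add]; ring_nf
      nlinarith [Real.exp_pos a, Real.exp_pos b]
    have h4 : (1 + σ * Real.exp b) ^ m ≤
        Real.exp (m * (b - a)) * (1 + σ * Real.exp a) ^ m := by
      calc (1 + σ * Real.exp b) ^ m
          ≤ (Real.exp (b - a) * (1 + σ * Real.exp a)) ^ m :=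
            Real.rpow_le_rpow hby.le h1 hm.le
        _ = Real.exp (m * (b - a)) * (1 + σ * Real.exp a) ^ m := by
            rw [Real.mul_rpow (Real.exp_pos _).le hbx.le, mul_comm m (b - a),
              Real.exp_mul]
    have h5 : Real.exp (l * a) * Real.exp (m * (b - a)) ≤
        Real.exp (l * b) * Real.exp (K * d) := by
      rw [← Real.exp_add, ← Real.exp_add]
      apply Real.exp_le_exp.mpr
      nlinarith [sub_nonneg.mpr hab]
    calc Real.exp (l * a) * (1 + σ * Real.exp b) ^ m
        ≤ Real.exp (l * a) * (Real.exp (m * (b - a)) * (1 + σ * Real.exp a) ^ m) :=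
          mul_le_mul_of_nonneg_left h4 (Real.exp_pos _).le
      _ = (Real.exp (l * a) * Real.exp (m * (b - a))) * (1 + σ * Real.exp a) ^ m := by ring
      _ ≤ (Real.exp (l * b) * Real.exp (K * d)) * (1 + σ * Real.exp a) ^ m :=
          mul_le_mul_of_nonneg_right h5 (Real.rpow_pos_of_pos hbx m).le
      _ = Real.exp (l * b) * (1 + σ * Real.exp a) ^ m * Real.exp (K * d) := by ring
  · -- b ≤ a
    have h4 : (1 + σ * Real.exp b) ^ m ≤ (1 + σ * Real.exp a) ^ m := by
      apply Real.rpow_le_rpow hby.le _ hm.le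
      have := Real.exp_le_exp.mpr hab
      nlinarith
    have h5 : Real.exp (l * a) ≤ Real.exp (l * b) * Real.exp (K * d) := by
      rw [← Real.exp_add]
      apply Real.exp_le_exp.mpr
      nlinarith [sub_nonneg.mpr hab]
    calc Real.exp (l * a) * (1 + σ * Real.exp b) ^ m
        ≤ Real.exp (l * a) * (1 + σ * Real.exp a) ^ m :=
          mul_le_mul_of_nonneg_left h4 (Real.exp_pos _).le
      _ ≤ (Real.exp (l * b) * Real.exp (K * d)) * (1 + σ * Real.exp a) ^ m :=
          mul_le_mul_of_nonneg_right h5 (Real.rpow_pos_of_pos hbx m).le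
      _ = Real.exp (l * b) * (1 + σ * Real.exp a) ^ m * Real.exp (K * d) := by ring

theorem exp_convolution_estimate (l m σ : ℝ) (hl : 0 < l) (hlm : l < m) (hσ : 0 < σ)
    (y : ℝ) :
    ∫ x : ℝ, Real.exp (l * |x|) / ((1 + σ * Real.exp |x|) ^ m * Real.exp (m * |x - y|))
      ≤ (4 / min l (m - l)) * (Real.exp (l * |y|) / (1 + σ * Real.exp |y|) ^ m) := by
  set δ := min l (m - l) with hδdef
  set K := max l (m - l) with hKdef
  have hδ : 0 < δ := lt_min hl (by linarith)
  have hKδ : K + δ = m := by rw [hKdef, hδdef, max_add_min]; ring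
  have hby : (0:ℝ) < 1 + σ * Real.exp |y| := by positivity
  set C := Real.exp (l * |y|) / (1 + σ * Real.exp |y|) ^ m with hC
  have hCpos : 0 < C := by
    apply div_pos (Real.exp_pos _) (Real.rpow_pos_of_pos hby m)
  -- pointwise bound
  have hpt : ∀ x : ℝ,
      Real.exp (l * |x|) / ((1 + σ * Real.exp |x|) ^ m * Real.exp (m * |x - y|))
        ≤ C * Real.exp (-δ * |x - y|) := by
    intro x
    have hbx : (0:ℝ) < 1 + σ * Real.exp |x| := by positivity
    have hA : (0:ℝ) < (1 + σ * Real.exp |x|) ^ m := Real.rpow_pos_of_pos hbx m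
    have hB : (0:ℝ) < (1 + σ * Real.exp |y|) ^ m := Real.rpow_pos_of_pos hby m
    have hE : (0:ℝ) < Real.exp (m * |x - y|) := Real.exp_pos _
    rw [hC, div_mul_eq_mul_div, div_le_div_iff₀ (by positivity) hB]
    have key := aux_keymul l m σ hl hlm hσ x y
    have hEδ : Real.exp (-δ * |x - y|) * Real.exp (m * |x - y|)
        = Real.exp (K * |x - y|) := by
      rw [← Real.exp_add]
      congr 1
      rw [← hKδ]; ring
    calc Real.exp (l * |x|) * (1 + σ * Real.exp |y|) ^ m
        ≤ Real.exp (l * |y|) * (1 + σ * Real.exp |x|) ^ m * Real.exp (K * |x - y|) := key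
      _ = Real.exp (l * |y|) * Real.exp (-δ * |x - y|)
            * ((1 + σ * Real.exp |x|) ^ m * Real.exp (m * |x - y|)) := by
          rw [← hEδ]; ring
  -- integrability of the majorant
  have hint : Integrable (fun x : ℝ => C * Real.exp (-δ * |x - y|)) :=
    ((aux_integrable_exp_abs δ hδ).comp_sub_right y).const_mul C
  have hnn : ∀ x : ℝ,
      0 ≤ Real.exp (l * |x|) / ((1 + σ * Real.exp |x|) ^ m * Real.exp (m * |x - y|)) := by
    intro x
    have hbx : (0:ℝ) < 1 + σ * Real.exp |x| := by positivity
    have hA : (0:ℝ) < (1 + σ * Real.exp |x|) ^ m := Real.rpow_pos_of_pos hbx m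
    positivity
  calc ∫ x : ℝ, Real.exp (l * |x|) / ((1 + σ * Real.exp |x|) ^ m * Real.exp (m * |x - y|))
      ≤ ∫ x : ℝ, C * Real.exp (-δ * |x - y|) :=
        integral_mono_of_nonneg (Filter.Eventually.of_forall hnn) hint
          (Filter.Eventually.of_forall hpt)
    _ = C * (2 / δ) := by
        rw [integral_const_mul,
          integral_sub_right_eq_self (fun x : ℝ => Real.exp (-δ * |x|)) y,
          aux_integral_exp_abs δ hδ]
    _ ≤ (4 / δ) * C := by
        rw [mul_comm]
        apply mul_le_mul_of_nonneg_right _ hCpos.le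
        rw [div_le_div_iff₀ hδ hδ]
        nlinarith
end

section
/- For 0 < l < m, σ > 0 and y > 0: ∫_{-∞}^0 e^{l|x|} / ((1 + σ e^{|x|})^m · e^{m|x−y|}) dx ≤ e^{ly} / (1 + σ e^y)^m · (1/(2m−l) + 1/(m−l)). -/
open Real MeasureTheory

lemma expMul_integrableOn_Iic {c : ℝ} (hc : 0 < c) :
    IntegrableOn (fun x => Real.exp (c * x)) (Set.Iic (0:ℝ)) := by
  rw [← Measure.map_neg_eq_self (volume : Measure ℝ)]
  have m : MeasurableEmbedding fun x : ℝ => -x := (Homeomorph.neg ℝ).measurableEmbedding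
  rw [m.integrableOn_map_iff]
  simp_rw [Function.comp_def, Set.neg_preimage, Set.neg_Iic, neg_zero]
  rw [integrableOn_Ici_iff_integrableOn_Ioi]
  have := exp_neg_integrableOn_Ioi 0 hc
  simpa [mul_neg] using this

lemma expMul_integral_Iic {c : ℝ} (hc : 0 < c) :
    ∫ x in Set.Iic (0:ℝ), Real.exp (c * x) = 1 / c := by
  have h1 : ∫ x in Set.Iic (0:ℝ), Real.exp (c * x)
      = ∫ x in Set.Ioi (0:ℝ), Real.exp (-(c * x)) := by
    rw [show Set.Ioi (0:ℝ) = Set.Ioi (-(0:ℝ)) by norm_num,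
      ← integral_comp_neg_Iic 0 (fun x => Real.exp (-(c * x)))]
    simp [mul_neg]
  rw [h1]
  have h2 := integral_comp_mul_left_Ioi (fun x => Real.exp (-x)) 0 hc
  simp only [mul_zero, smul_eq_mul] at h2
  rw [h2, integral_exp_neg_Ioi_zero]
  simp [one_div]

theorem exp_convolution_negative_half (l m σ y : ℝ) (hl : 0 < l) (hlm : l < m) (hσ : 0 < σ)
    (hy : 0 < y) :
    ∫ x in Set.Iic (0:ℝ),
        Real.exp (l * |x|) / ((1 + σ * Real.exp |x|) ^ m * Real.exp (m * |x - y|))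
      ≤ Real.exp (l * y) / (1 + σ * Real.exp y) ^ m * (1 / (2 * m - l) + 1 / (m - l)) := by

  have hm : 0 < m := hl.trans hlm
  have hDy : (0:ℝ) < 1 + σ * Real.exp y := by positivity
  have hDm : (0:ℝ) < (1 + σ * Real.exp y) ^ m := rpow_pos_of_pos hDy m
  set A : ℝ := Real.exp (l * y) / (1 + σ * Real.exp y) ^ m with hA
  have hA0 : 0 < A := by positivity
  have hc1 : 0 < 2 * m - l := by linarith
  have hc2 : 0 < m - l := by linarith
  set f : ℝ → ℝ := fun x =>
    Real.exp (l * |x|) / ((1 + σ * Real.exp |x|) ^ m * Real.exp (m * |x - y|)) with hf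
  set g : ℝ → ℝ := fun x =>
    A * Real.exp ((2 * m - l) * x) + A * Real.exp ((m - l) * x) with hg
  have hgi : IntegrableOn g (Set.Iic (0:ℝ)) :=
    ((expMul_integrableOn_Iic hc1).const_mul A).add ((expMul_integrableOn_Iic hc2).const_mul A)
  have hf0 : ∀ x, 0 ≤ f x := fun x => by
    have := rpow_pos_of_pos (show (0:ℝ) < 1 + σ * Real.exp |x| by positivity) m
    positivity
  have hfg : ∀ x ∈ Set.Iic (0:ℝ), f x ≤ g x := by
    intro x hx
    simp only [Set.mem_Iic] at hx
    have habs : |x| = -x := abs_of_nonpos hx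
    have habs2 : |x - y| = y - x := by rw [abs_of_nonpos (by linarith)]; ring
    have hDx : (0:ℝ) < 1 + σ * Real.exp (-x) := by positivity
    simp only [hf, habs, habs2]
    rcases le_or_gt (-y) x with hcase | hcase
    · -- -y ≤ x ≤ 0
      have key : (1 + σ * Real.exp y) ^ m ≤ (1 + σ * Real.exp (-x)) ^ m * Real.exp (m * (y + x)) := by
        rw [show Real.exp (m * (y + x)) = Real.exp (y + x) ^ m by
            rw [← Real.exp_mul, mul_comm],
          ← Real.mul_rpow hDx.le (Real.exp_pos _).le]
        apply Real.rpow_le_rpow hDy.le _ hm.le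
        have h1 : (1:ℝ) ≤ Real.exp (y + x) := by
          rw [← Real.exp_zero]; exact Real.exp_le_exp.mpr (by linarith)
        have hey : Real.exp (-x) * Real.exp (y + x) = Real.exp y := by
          rw [← Real.exp_add]; ring_nf
        have : (1 + σ * Real.exp (-x)) * Real.exp (y + x)
            = Real.exp (y + x) + σ * Real.exp y := by
          rw [add_mul, one_mul, mul_assoc, hey]
        rw [this]; nlinarith [Real.exp_pos y]
      have hsplit : Real.exp (m * (y - x))
          = Real.exp (m * (y + x)) * Real.exp (-(2 * m) * x) := by
        rw [← Real.exp_add]; ring_nf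
      have hden : (1 + σ * Real.exp y) ^ m * Real.exp (-(2 * m) * x)
          ≤ (1 + σ * Real.exp (-x)) ^ m * Real.exp (m * (y - x)) := by
        rw [hsplit, ← mul_assoc]
        exact mul_le_mul_of_nonneg_right key (Real.exp_pos _).le
      have h1 : Real.exp (l * -x) / ((1 + σ * Real.exp (-x)) ^ m * Real.exp (m * (y - x)))
          ≤ Real.exp (l * -x) / ((1 + σ * Real.exp y) ^ m * Real.exp (-(2 * m) * x)) :=
        div_le_div_of_nonneg_left (Real.exp_pos _).le (by positivity) hden
      refine h1.trans ?_
      have h2 : Real.exp (l * -x) / ((1 + σ * Real.exp y) ^ m * Real.exp (-(2 * m) * x))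
          = Real.exp ((2 * m - l) * x) / (1 + σ * Real.exp y) ^ m := by
        have e1 : Real.exp (l * -x)
            = Real.exp ((2 * m - l) * x) * Real.exp (-(2 * m) * x) := by
          rw [← Real.exp_add]; ring_nf
        rw [e1, mul_div_mul_right _ _ (Real.exp_ne_zero _)]
      rw [h2]
      have h3 : Real.exp ((2 * m - l) * x) / (1 + σ * Real.exp y) ^ m
          ≤ A * Real.exp ((2 * m - l) * x) := by
        rw [hA, div_mul_eq_mul_div, div_le_div_iff₀ hDm hDm]
        have h4 : (1:ℝ) ≤ Real.exp (l * y) := by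
          rw [← Real.exp_zero]; exact Real.exp_le_exp.mpr (by positivity)
        nlinarith [mul_pos (Real.exp_pos ((2*m-l)*x)) hDm]
      refine h3.trans ?_
      simp only [hg, le_add_iff_nonneg_right]
      positivity
    · -- x < -y
      have key : (1 + σ * Real.exp y) ^ m ≤ (1 + σ * Real.exp (-x)) ^ m := by
        apply Real.rpow_le_rpow hDy.le _ hm.le
        have : Real.exp y ≤ Real.exp (-x) := Real.exp_le_exp.mpr (by linarith)
        nlinarith
      have hden : (1 + σ * Real.exp y) ^ m * Real.exp (m * (y - x))
          ≤ (1 + σ * Real.exp (-x)) ^ m * Real.exp (m * (y - x)) :=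
        mul_le_mul_of_nonneg_right key (Real.exp_pos _).le
      have h1 : Real.exp (l * -x) / ((1 + σ * Real.exp (-x)) ^ m * Real.exp (m * (y - x)))
          ≤ Real.exp (l * -x) / ((1 + σ * Real.exp y) ^ m * Real.exp (m * (y - x))) :=
        div_le_div_of_nonneg_left (Real.exp_pos _).le (by positivity) hden
      refine h1.trans ?_
      have h2 : Real.exp (l * -x) / ((1 + σ * Real.exp y) ^ m * Real.exp (m * (y - x)))
          = Real.exp ((m - l) * x) * Real.exp (-(m * y)) / (1 + σ * Real.exp y) ^ m := by
        have e1 : Real.exp (l * -x)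
            = Real.exp ((m - l) * x) * Real.exp (-(m * y)) * Real.exp (m * (y - x)) := by
          rw [← Real.exp_add, ← Real.exp_add]; ring_nf
        rw [e1, mul_div_mul_right _ _ (Real.exp_ne_zero _)]
      rw [h2]
      have h3 : Real.exp ((m - l) * x) * Real.exp (-(m * y)) / (1 + σ * Real.exp y) ^ m
          ≤ A * Real.exp ((m - l) * x) := by
        rw [hA, div_mul_eq_mul_div, div_le_div_iff₀ hDm hDm]
        have hee : Real.exp (-(m * y)) ≤ Real.exp (l * y) :=
          Real.exp_le_exp.mpr (by nlinarith)
        nlinarith [mul_pos (Real.exp_pos ((m-l)*x)) hDm, Real.exp_pos ((m-l)*x),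
          Real.exp_pos (-(m*y))]
      refine h3.trans ?_
      simp only [hg, le_add_iff_nonneg_left]
      positivity
  have hmono : ∫ x in Set.Iic (0:ℝ), f x ≤ ∫ x in Set.Iic (0:ℝ), g x := by
    apply integral_mono_of_nonneg
    · exact Filter.Eventually.of_forall hf0
    · exact hgi
    · exact (ae_restrict_iff' measurableSet_Iic).mpr (Filter.Eventually.of_forall hfg)
  refine hmono.trans ?_
  have : ∫ x in Set.Iic (0:ℝ), g x = A * (1 / (2 * m - l)) + A * (1 / (m - l)) := by
    rw [hg, integral_add ((expMul_integrableOn_Iic hc1).const_mul A)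
      ((expMul_integrableOn_Iic hc2).const_mul A),
      integral_const_mul, integral_const_mul, expMul_integral_Iic hc1, expMul_integral_Iic hc2]
  rw [this, hA]
  ring_nf
  exact le_rfl
end

section
/- Let c > 0 and let φ : ℝ → ℝ be a nontrivial continuous bounded function with φ(x) → 0 as |x| → ∞, satisfying φ(2c − φ)/3 = K ∗ φ² where K(x) = (1/2)e^{−|x|}. Then 0 < φ(x) < 2c for all x, and sup φ is attained at some finite point and satisfies sup φ < 2c. -/
/-!
The right-hand side is the convolution of `φ ^ 2` with the strictly positive integrable kernel
`exp (-|x|) / 2`; as `φ ^ 2` is continuous, nonnegative and nonzero on a nonempty open set, it is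
strictly positive at every point. Hence `φ (2c - φ) > 0` everywhere, which for `c > 0` forces
`0 < φ < 2c`. Being positive somewhere and vanishing at infinity, `φ` attains its supremum.
-/

open Real MeasureTheory Filter Topology

lemma exp_neg_abs_le_two_mul_inv_one_add_sq (y : ℝ) : exp (-|y|) ≤ 2 * (1 + y ^ 2)⁻¹ := by
  have hexp := quadratic_le_exp_of_nonneg (abs_nonneg y)
  rw [sq_abs] at hexp
  rw [exp_neg, ← div_eq_mul_inv, inv_le_comm₀ (exp_pos _) (by positivity), inv_div]
  nlinarith [abs_nonneg y]

lemma integrable_exp_neg_abs : Integrable fun y : ℝ => exp (-|y|) :=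
  (integrable_inv_one_add_sq.const_mul 2).mono' (by fun_prop) <| ae_of_all _ fun y => by
    rw [norm_of_nonneg (exp_pos _).le]
    exact exp_neg_abs_le_two_mul_inv_one_add_sq y

lemma MeasureTheory.Integrable.comp_sub_left_mul_bdd {G : Type*} [AddGroup G] [MeasurableSpace G]
    [MeasurableAdd G] [MeasurableNeg G] {μ : Measure G} [μ.IsNegInvariant] [μ.IsAddLeftInvariant]
    {K g : G → ℝ} (hK : Integrable K μ) (x : G) (hg : AEStronglyMeasurable g μ) {C : ℝ}
    (hC : ∀ y, |g y| ≤ C) : Integrable (fun y => K (x - y) * g y) μ :=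
  (hK.comp_sub_left x).mul_bdd hg (ae_of_all _ hC)

lemma integral_mul_pos_of_continuous {X : Type*} [TopologicalSpace X] [MeasurableSpace X]
    [OpensMeasurableSpace X] {μ : Measure X} [μ.IsOpenPosMeasure] {k f : X → ℝ}
    (hk : ∀ y, 0 < k y) (hf : Continuous f) (hf_nonneg : 0 ≤ f) (hf_ne : ∃ x, f x ≠ 0)
    (hint : Integrable (fun y => k y * f y) μ) : 0 < ∫ y, k y * f y ∂μ := by
  have hsupp : Function.support (fun y => k y * f y) = Function.support f := by
    ext y; simp [(hk y).ne']
  rw [integral_pos_iff_support_of_nonneg (fun y => mul_nonneg (hk y).le (hf_nonneg y)) hint, hsupp]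
  obtain ⟨x, hx⟩ := hf_ne
  exact hf.isOpen_support.measure_pos μ ⟨x, hx⟩

lemma pos_and_lt_of_mul_sub_pos {a b : ℝ} (hb : 0 < b) (h : 0 < a * (b - a)) : 0 < a ∧ a < b := by
  rcases pos_and_pos_or_neg_and_neg_of_mul_pos h with ⟨ha, hba⟩ | ⟨ha, hba⟩
  · exact ⟨ha, by linarith⟩
  · linarith

lemma Continuous.exists_forall_ge_of_tendsto_cocompact {X : Type*} [TopologicalSpace X]
    {f : X → ℝ} (hf : Continuous f) (hdecay : Tendsto f (cocompact X) (𝓝 0)) {x₁ : X}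
    (hx₁ : 0 < f x₁) : ∃ x₀, ∀ x, f x ≤ f x₀ :=
  hf.exists_forall_ge' x₁ <| (hdecay.eventually_lt_const hx₁).mono fun _ h => h.le

theorem solitary_wave_bounds (c : ℝ) (hc : 0 < c) (φ : ℝ → ℝ)
    (hφ_cont : Continuous φ) (hφ_bdd : ∃ C, ∀ x, |φ x| ≤ C)
    (hφ_nontrivial : ∃ x, φ x ≠ 0)
    (hφ_decay : Tendsto φ (cocompact ℝ) (nhds 0))
    (heq : ∀ x, φ x * (2 * c - φ x) / 3
      = ∫ y : ℝ, (1 / 2) * Real.exp (-|x - y|) * (φ y) ^ 2) :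
    (∀ x, 0 < φ x ∧ φ x < 2 * c)
    ∧ ∃ x₀, (∀ x, φ x ≤ φ x₀) ∧ φ x₀ < 2 * c := by
  obtain ⟨C, hC⟩ := hφ_bdd
  have hφ_sq_bdd (y : ℝ) : |φ y ^ 2| ≤ C ^ 2 := by
    rw [abs_pow]; exact pow_le_pow_left₀ (abs_nonneg _) (hC y) 2
  have hconv_pos (x : ℝ) : 0 < ∫ y : ℝ, (1 / 2) * exp (-|x - y|) * φ y ^ 2 :=
    integral_mul_pos_of_continuous (fun y => by positivity) (hφ_cont.pow 2) (fun y => sq_nonneg _)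
      (hφ_nontrivial.imp fun _ h => pow_ne_zero 2 h)
      ((integrable_exp_neg_abs.const_mul (1 / 2)).comp_sub_left_mul_bdd x
        (hφ_cont.pow 2).aestronglyMeasurable hφ_sq_bdd)
  have hbounds (x : ℝ) : 0 < φ x ∧ φ x < 2 * c :=
    pos_and_lt_of_mul_sub_pos (by positivity) (by linarith [heq x, hconv_pos x])
  obtain ⟨x₁, -⟩ := hφ_nontrivial
  obtain ⟨x₀, hx₀⟩ := hφ_cont.exists_forall_ge_of_tendsto_cocompact hφ_decay (hbounds x₁).1
  exact ⟨hbounds, x₀, hx₀, (hbounds x₀).2⟩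
end

section
/- Let c > 0, M < 2c, and let φ : ℝ → ℝ be continuous, nonnegative, with 0 ≤ φ ≤ M, satisfying 2cφ − φ² = 3K∗φ² with K(x) = (1/2)e^{−|x|}. Suppose moreover that x ↦ e^{|x|/2} φ(x) belongs to L²(ℝ). Then x ↦ e^{|x|} φ(x) is bounded on ℝ. -/
open Real MeasureTheory

/-!
Since `0 ≤ φ ≤ M`, the equation gives `(2c - M) φ(x) ≤ 3 (K ∗ φ²)(x)`. By the triangle
inequality `|x| ≤ |x - y| + |y|`, the weight `e^{|x|}` moves through the exponential kernel
`e^{-|x - y|}` onto `y`, so `e^{|x|} (K ∗ φ²)(x)` is at most half of `∫ e^{|y|} φ(y)²`,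
the squared `L²` norm of `e^{|·|/2} φ`.
-/

lemma exp_norm_mul_integral_exp_neg_norm_sub_mul_le {E : Type*} [SeminormedAddCommGroup E]
    [MeasurableSpace E] {μ : Measure E} {g : E → ℝ} (hg : 0 ≤ g)
    (hint : Integrable (fun y => exp ‖y‖ * g y) μ) (x : E) :
    exp ‖x‖ * ∫ y, exp (-‖x - y‖) * g y ∂μ ≤ ∫ y, exp ‖y‖ * g y ∂μ := by
  rw [← integral_const_mul]
  refine integral_mono_of_nonneg
    (.of_forall fun y => mul_nonneg (exp_pos _).le (mul_nonneg (exp_pos _).le (hg y))) hint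
    (.of_forall fun y => ?_)
  have hweight : exp ‖x‖ * exp (-‖x - y‖) ≤ exp ‖y‖ := by
    rw [← exp_add, exp_le_exp]
    linarith [norm_le_norm_add_norm_sub' x y, norm_sub_rev x y]
  calc exp ‖x‖ * (exp (-‖x - y‖) * g y) = exp ‖x‖ * exp (-‖x - y‖) * g y := by ring
    _ ≤ exp ‖y‖ * g y := mul_le_mul_of_nonneg_right hweight (hg y)

lemma sq_exp_half_mul (t a : ℝ) : (exp (t / 2) * a) ^ 2 = exp t * a ^ 2 := by
  rw [mul_pow, ← exp_nat_mul]
  ring_nf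

theorem exponential_decay_bootstrap_general (c M : ℝ) (hM : M < 2 * c)
    (φ : ℝ → ℝ)
    (hφ_bound : ∀ x, 0 ≤ φ x ∧ φ x ≤ M)
    (heq : ∀ x, 2 * c * φ x - (φ x) ^ 2
      = 3 * ∫ y : ℝ, (1 / 2) * Real.exp (-|x - y|) * (φ y) ^ 2)
    (hL2 : MemLp (fun x => Real.exp (|x| / 2) * φ x) 2 volume) :
    ∃ C, ∀ x, Real.exp |x| * φ x ≤ C := by
  have hint : Integrable (fun y => exp ‖y‖ * φ y ^ 2) := by
    simpa only [sq_exp_half_mul, norm_eq_abs] using hL2.integrable_sq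
  refine ⟨3 / (2 * (2 * c - M)) * ∫ y, exp ‖y‖ * φ y ^ 2, fun x => ?_⟩
  have hconv := exp_norm_mul_integral_exp_neg_norm_sub_mul_le (fun y => sq_nonneg (φ y)) hint x
  have heqx := heq x
  simp only [mul_assoc, integral_const_mul] at heqx
  simp only [norm_eq_abs] at hconv ⊢
  have hφx := hφ_bound x
  have hgap : (2 * c - M) * φ x ≤ 2 * c * φ x - φ x ^ 2 := by nlinarith
  rw [div_mul_eq_mul_div, le_div_iff₀ (by linarith)]
  nlinarith [exp_pos |x|]

theorem exponential_decay_bootstrap (c M : ℝ) (hc : 0 < c) (hM : M < 2 * c)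
    (φ : ℝ → ℝ) (hφ_cont : Continuous φ)
    (hφ_bound : ∀ x, 0 ≤ φ x ∧ φ x ≤ M)
    (heq : ∀ x, 2 * c * φ x - (φ x) ^ 2
      = 3 * ∫ y : ℝ, (1 / 2) * Real.exp (-|x - y|) * (φ y) ^ 2)
    (hL2 : MemLp (fun x => Real.exp (|x| / 2) * φ x) 2 volume) :
    ∃ C, ∀ x, Real.exp |x| * φ x ≤ C :=
  exponential_decay_bootstrap_general c M hM φ hφ_bound heq hL2
end
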